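/- Let n ≥ 1, μ ∈ ℝⁿ, and Σ a positive definite symmetric real n×n matrix, and let ν = ν_{μ,Σ} be the corresponding Gaussian measure on ℝⁿ. With M(x) = −(1/2)Σ⁻¹ + (1/2)Σ⁻¹(x−μ)(x−μ)ᵀΣ⁻¹ and K = Σ⁻¹, for all indices a, b, c, d, e, f one has ∫ M(x)_{ab}·M(x)_{cd}·M(x)_{ef} dν(x) = (1/8)·(K_{ac}K_{de}K_{fb} + K_{ac}K_{df}K_{eb} + K_{ad}K_{ce}K_{fb} + K_{ad}K_{cf}K_{eb} + K_{ae}K_{fc}K_{db} + K_{ae}K_{fd}K_{cb} + K_{af}K_{ec}K_{db} + K_{af}K_{ed}K_{cb}). (This is the Amari–Chentsov component C_{ΣΣΣ} = Σ⁻¹⊗Σ⁻¹⊗Σ⁻¹ of the multivariate Gaussian family, written in symmetrized component form; it is evaluated using the fourth and sixth central moments of the multivariate Gaussian.) -/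

import Mathlib

open MeasureTheory Matrix Real

/-- The Lebesgue density of the multivariate Gaussian distribution with mean `μ` and
covariance matrix `S` on `ℝⁿ`. -/
noncomputable def mvGaussDensity {n : ℕ} (μ : Fin n → ℝ) (S : Matrix (Fin n) (Fin n) ℝ)
    (x : Fin n → ℝ) : ℝ :=
  (2 * π) ^ (-(n : ℝ) / 2) * S.det ^ (-(1 : ℝ) / 2) *
    Real.exp (-(1 / 2) * ((x - μ) ⬝ᵥ (S⁻¹ *ᵥ (x - μ))))

/-- The multivariate Gaussian measure `ν_{μ,Σ}` on `ℝⁿ`, given by its Lebesgue density. -/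
noncomputable def mvGaussMeasure {n : ℕ} (μ : Fin n → ℝ) (S : Matrix (Fin n) (Fin n) ℝ) :
    Measure (Fin n → ℝ) :=
  volume.withDensity fun x => ENNReal.ofReal (mvGaussDensity μ S x)

/-- The score of the multivariate Gaussian log-likelihood with respect to the covariance
parameter: M(x) = −(1/2)Σ⁻¹ + (1/2)Σ⁻¹(x−μ)(x−μ)ᵀΣ⁻¹. -/
noncomputable def mvScoreSigma {n : ℕ} (μ : Fin n → ℝ) (S : Matrix (Fin n) (Fin n) ℝ)
    (x : Fin n → ℝ) : Matrix (Fin n) (Fin n) ℝ :=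
  (-(1 / 2) : ℝ) • S⁻¹ + ((1 / 2) : ℝ) • (S⁻¹ * Matrix.vecMulVec (x - μ) (x - μ) * S⁻¹)

/-!
Factor `Σ = A Aᵀ`. Substituting `x = μ + A u` turns `ν` into the standard Gaussian in `u`, and
`Σ⁻¹ (x - μ) = A⁻ᵀ u`, so `M_pq = ½ (⟨w_p, u⟩ ⟨w_q, u⟩ - ⟨w_p, w_q⟩)` where `w_p` is the `p`-th row
of `A⁻ᵀ` and `⟨w_p, w_q⟩ = K_pq`. Gaussian integration by parts, `E[u_i P] = E[∂_i P]` for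
polynomials `P`, gives Wick's formula for moments of linear forms; in the expectation of a product
of three such centred quadratics only the eight pairings linking all three factors survive.
-/

open MvPolynomial ProbabilityTheory

lemma gaussianPDFReal_zero_one (t : ℝ) :
    gaussianPDFReal 0 1 t = (√(2 * π))⁻¹ * exp (-(1 / 2) * t ^ 2) := by
  simp only [gaussianPDFReal, NNReal.coe_one, mul_one, sub_zero]
  congr 2
  ring

lemma hasDerivAt_gaussianPDFReal_zero_one (t : ℝ) :
    HasDerivAt (gaussianPDFReal 0 1) (-t * gaussianPDFReal 0 1 t) t := by
  simp only [funext gaussianPDFReal_zero_one]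
  refine ((((hasDerivAt_pow 2 t).const_mul (-(1 / 2) : ℝ)).exp).const_mul _).congr_deriv ?_
  norm_num
  ring

lemma integrable_pow_mul_gaussianPDFReal (k : ℕ) :
    Integrable fun t : ℝ => t ^ k * gaussianPDFReal 0 1 t := by
  have h := integrable_rpow_mul_exp_neg_mul_sq (b := 1 / 2) (by norm_num)
    (s := k) (by linarith [(k.cast_nonneg : (0 : ℝ) ≤ k)])
  simp only [Real.rpow_natCast] at h
  simpa only [gaussianPDFReal_zero_one, mul_left_comm, neg_mul] using h.const_mul (√(2 * π))⁻¹

noncomputable def stdGaussMoment (k : ℕ) : ℝ := ∫ t, t ^ k * gaussianPDFReal 0 1 t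

lemma stdGaussMoment_zero : stdGaussMoment 0 = 1 := by
  simpa [stdGaussMoment] using integral_gaussianPDFReal_eq_one 0 one_ne_zero

-- At `k = 0` the truncated `k - 1` is harmless: its coefficient vanishes.
lemma stdGaussMoment_succ (k : ℕ) : stdGaussMoment (k + 1) = k * stdGaussMoment (k - 1) := by
  have hderiv (t : ℝ) : HasDerivAt (fun t => t ^ k * gaussianPDFReal 0 1 t)
      (k * (t ^ (k - 1) * gaussianPDFReal 0 1 t) - t ^ (k + 1) * gaussianPDFReal 0 1 t) t := by
    refine ((hasDerivAt_pow k t).mul (hasDerivAt_gaussianPDFReal_zero_one t)).congr_deriv ?_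
    ring
  have hibp := integral_eq_zero_of_hasDerivAt_of_integrable hderiv
    (((integrable_pow_mul_gaussianPDFReal _).const_mul _).sub
      (integrable_pow_mul_gaussianPDFReal _)) (integrable_pow_mul_gaussianPDFReal k)
  rw [integral_sub ((integrable_pow_mul_gaussianPDFReal _).const_mul _)
    (integrable_pow_mul_gaussianPDFReal _), integral_const_mul, sub_eq_zero] at hibp
  exact hibp.symm

section StdGaussExpect

variable {σ : Type*} [Fintype σ]

/-- The standard Gaussian expectation of a polynomial, defined on monomials so that it is linear
by construction; `integral_prod_gaussianPDFReal_mul_eval` identifies it with the integral. -/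
noncomputable def stdGaussExpect : MvPolynomial σ ℝ →ₗ[ℝ] ℝ :=
  (basisMonomials σ ℝ).constr ℝ fun c => ∏ r, stdGaussMoment (c r)

lemma stdGaussExpect_monomial (c : σ →₀ ℕ) (a : ℝ) :
    stdGaussExpect (monomial c a) = a * ∏ r, stdGaussMoment (c r) := by
  have hbasis : monomial c a = a • basisMonomials σ ℝ c := by
    rw [coe_basisMonomials, smul_monomial, smul_eq_mul, mul_one]
  rw [hbasis, map_smul, stdGaussExpect, Module.Basis.constr_basis, smul_eq_mul]

lemma stdGaussExpect_C (a : ℝ) : stdGaussExpect (C a : MvPolynomial σ ℝ) = a := by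
  simp [← monomial_zero', stdGaussExpect_monomial, stdGaussMoment_zero]

lemma stdGaussExpect_C_mul (a : ℝ) (p : MvPolynomial σ ℝ) :
    stdGaussExpect (C a * p) = a * stdGaussExpect p := by
  rw [C_mul', map_smul, smul_eq_mul]

lemma stdGaussExpect_X_mul (i : σ) (p : MvPolynomial σ ℝ) :
    stdGaussExpect (X i * p) = stdGaussExpect (pderiv i p) := by
  induction p using MvPolynomial.induction_on' with
  | add p q hp hq => rw [mul_add, map_add, map_add, hp, hq, map_add]
  | monomial c a =>
    classical
    rw [X, monomial_mul, one_mul, pderiv_monomial, stdGaussExpect_monomial,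
      stdGaussExpect_monomial, Fintype.prod_eq_mul_prod_compl i,
      Fintype.prod_eq_mul_prod_compl i]
    have hcompl : ∀ r ∈ ({i}ᶜ : Finset σ),
        stdGaussMoment ((Finsupp.single i 1 + c : σ →₀ ℕ) r)
          = stdGaussMoment ((c - Finsupp.single i 1 : σ →₀ ℕ) r) := by
      intro r hr
      have hri : i ≠ r := fun h => by simp_all
      simp [Finsupp.single_eq_of_ne' hri]
    rw [Finset.prod_congr rfl hcompl, Finsupp.add_apply, Finsupp.single_eq_same, add_comm,
      stdGaussMoment_succ, Finsupp.tsub_apply, Finsupp.single_eq_same]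
    ring

noncomputable def linForm (v : σ → ℝ) : MvPolynomial σ ℝ := ∑ i, C (v i) * X i

lemma eval_linForm (u v : σ → ℝ) : eval u (linForm v) = v ⬝ᵥ u := by
  simp [linForm, dotProduct]

noncomputable def dirDeriv (v : σ → ℝ) : Derivation ℝ (MvPolynomial σ ℝ) (MvPolynomial σ ℝ) :=
  ∑ i, v i • pderiv i

lemma dirDeriv_apply (v : σ → ℝ) (p : MvPolynomial σ ℝ) :
    dirDeriv v p = ∑ i, v i • pderiv i p := by
  rw [dirDeriv, ← Derivation.coeFnAddMonoidHom_apply, map_sum, Finset.sum_apply]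
  rfl

lemma dirDeriv_linForm (v w : σ → ℝ) : dirDeriv v (linForm w) = C (v ⬝ᵥ w) := by
  classical
  simp [dirDeriv_apply, linForm, pderiv_X, Pi.single_apply, dotProduct, map_sum, smul_eq_C_mul,
    C_mul, mul_comm]

lemma stdGaussExpect_linForm_mul (v : σ → ℝ) (p : MvPolynomial σ ℝ) :
    stdGaussExpect (linForm v * p) = stdGaussExpect (dirDeriv v p) := by
  simp only [linForm, dirDeriv_apply, Finset.sum_mul, map_sum, mul_assoc, stdGaussExpect_C_mul,
    stdGaussExpect_X_mul, map_smul, smul_eq_mul]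

lemma stdGaussExpect_linForm_mul_linForm (v₁ v₂ : σ → ℝ) :
    stdGaussExpect (linForm v₁ * linForm v₂) = v₁ ⬝ᵥ v₂ := by
  rw [stdGaussExpect_linForm_mul, dirDeriv_linForm, stdGaussExpect_C]

lemma stdGaussExpect_linForm_mul₄ (v₁ v₂ v₃ v₄ : σ → ℝ) :
    stdGaussExpect (linForm v₁ * linForm v₂ * linForm v₃ * linForm v₄) =
      v₁ ⬝ᵥ v₂ * (v₃ ⬝ᵥ v₄) + v₁ ⬝ᵥ v₃ * (v₂ ⬝ᵥ v₄) + v₁ ⬝ᵥ v₄ * (v₂ ⬝ᵥ v₃) := by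
  have hderiv : dirDeriv v₁ (linForm v₂ * linForm v₃ * linForm v₄) =
      C (v₁ ⬝ᵥ v₂) * (linForm v₃ * linForm v₄) + C (v₁ ⬝ᵥ v₃) * (linForm v₂ * linForm v₄)
        + C (v₁ ⬝ᵥ v₄) * (linForm v₂ * linForm v₃) := by
    simp only [Derivation.leibniz, dirDeriv_linForm, smul_eq_mul]
    ring
  rw [mul_assoc, mul_assoc, ← mul_assoc (linForm v₂), stdGaussExpect_linForm_mul, hderiv]
  simp only [map_add, stdGaussExpect_C_mul, stdGaussExpect_linForm_mul_linForm]

lemma stdGaussExpect_linForm_mul₆ (v₁ v₂ v₃ v₄ v₅ v₆ : σ → ℝ) :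
    stdGaussExpect (linForm v₁ * linForm v₂ * linForm v₃ * linForm v₄ * linForm v₅ *
        linForm v₆) =
      v₁ ⬝ᵥ v₂ * (v₃ ⬝ᵥ v₄ * (v₅ ⬝ᵥ v₆) + v₃ ⬝ᵥ v₅ * (v₄ ⬝ᵥ v₆) + v₃ ⬝ᵥ v₆ * (v₄ ⬝ᵥ v₅))
      + v₁ ⬝ᵥ v₃ * (v₂ ⬝ᵥ v₄ * (v₅ ⬝ᵥ v₆) + v₂ ⬝ᵥ v₅ * (v₄ ⬝ᵥ v₆) + v₂ ⬝ᵥ v₆ * (v₄ ⬝ᵥ v₅))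
      + v₁ ⬝ᵥ v₄ * (v₂ ⬝ᵥ v₃ * (v₅ ⬝ᵥ v₆) + v₂ ⬝ᵥ v₅ * (v₃ ⬝ᵥ v₆) + v₂ ⬝ᵥ v₆ * (v₃ ⬝ᵥ v₅))
      + v₁ ⬝ᵥ v₅ * (v₂ ⬝ᵥ v₃ * (v₄ ⬝ᵥ v₆) + v₂ ⬝ᵥ v₄ * (v₃ ⬝ᵥ v₆) + v₂ ⬝ᵥ v₆ * (v₃ ⬝ᵥ v₄))
      + v₁ ⬝ᵥ v₆ * (v₂ ⬝ᵥ v₃ * (v₄ ⬝ᵥ v₅) + v₂ ⬝ᵥ v₄ * (v₃ ⬝ᵥ v₅) + v₂ ⬝ᵥ v₅ * (v₃ ⬝ᵥ v₄)) := by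
  have hderiv : dirDeriv v₁ (linForm v₂ * linForm v₃ * linForm v₄ * linForm v₅ * linForm v₆) =
      C (v₁ ⬝ᵥ v₂) * (linForm v₃ * linForm v₄ * linForm v₅ * linForm v₆)
        + C (v₁ ⬝ᵥ v₃) * (linForm v₂ * linForm v₄ * linForm v₅ * linForm v₆)
        + C (v₁ ⬝ᵥ v₄) * (linForm v₂ * linForm v₃ * linForm v₅ * linForm v₆)
        + C (v₁ ⬝ᵥ v₅) * (linForm v₂ * linForm v₃ * linForm v₄ * linForm v₆)
        + C (v₁ ⬝ᵥ v₆) * (linForm v₂ * linForm v₃ * linForm v₄ * linForm v₅) := by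
    simp only [Derivation.leibniz, dirDeriv_linForm, smul_eq_mul]
    ring
  have hassoc : linForm v₁ * linForm v₂ * linForm v₃ * linForm v₄ * linForm v₅ * linForm v₆ =
      linForm v₁ * (linForm v₂ * linForm v₃ * linForm v₄ * linForm v₅ * linForm v₆) := by
    ring
  rw [hassoc, stdGaussExpect_linForm_mul, hderiv]
  simp only [map_add, stdGaussExpect_C_mul, stdGaussExpect_linForm_mul₄]

lemma stdGaussExpect_centered_quadratic_mul₃ (v₁ v₂ v₃ v₄ v₅ v₆ : σ → ℝ) :
    stdGaussExpect ((linForm v₁ * linForm v₂ - C (v₁ ⬝ᵥ v₂)) *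
        (linForm v₃ * linForm v₄ - C (v₃ ⬝ᵥ v₄)) * (linForm v₅ * linForm v₆ - C (v₅ ⬝ᵥ v₆))) =
      v₁ ⬝ᵥ v₃ * (v₄ ⬝ᵥ v₅) * (v₆ ⬝ᵥ v₂) + v₁ ⬝ᵥ v₃ * (v₄ ⬝ᵥ v₆) * (v₅ ⬝ᵥ v₂)
        + v₁ ⬝ᵥ v₄ * (v₃ ⬝ᵥ v₅) * (v₆ ⬝ᵥ v₂) + v₁ ⬝ᵥ v₄ * (v₃ ⬝ᵥ v₆) * (v₅ ⬝ᵥ v₂)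
        + v₁ ⬝ᵥ v₅ * (v₆ ⬝ᵥ v₃) * (v₄ ⬝ᵥ v₂) + v₁ ⬝ᵥ v₅ * (v₆ ⬝ᵥ v₄) * (v₃ ⬝ᵥ v₂)
        + v₁ ⬝ᵥ v₆ * (v₅ ⬝ᵥ v₃) * (v₄ ⬝ᵥ v₂) + v₁ ⬝ᵥ v₆ * (v₅ ⬝ᵥ v₄) * (v₃ ⬝ᵥ v₂) := by
  have hexpand : (linForm v₁ * linForm v₂ - C (v₁ ⬝ᵥ v₂)) *
      (linForm v₃ * linForm v₄ - C (v₃ ⬝ᵥ v₄)) * (linForm v₅ * linForm v₆ - C (v₅ ⬝ᵥ v₆)) =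
      linForm v₁ * linForm v₂ * linForm v₃ * linForm v₄ * linForm v₅ * linForm v₆
        - C (v₅ ⬝ᵥ v₆) * (linForm v₁ * linForm v₂ * linForm v₃ * linForm v₄)
        - C (v₃ ⬝ᵥ v₄) * (linForm v₁ * linForm v₂ * linForm v₅ * linForm v₆)
        - C (v₁ ⬝ᵥ v₂) * (linForm v₃ * linForm v₄ * linForm v₅ * linForm v₆)
        + C (v₃ ⬝ᵥ v₄ * (v₅ ⬝ᵥ v₆)) * (linForm v₁ * linForm v₂)
        + C (v₁ ⬝ᵥ v₂ * (v₅ ⬝ᵥ v₆)) * (linForm v₃ * linForm v₄)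
        + C (v₁ ⬝ᵥ v₂ * (v₃ ⬝ᵥ v₄)) * (linForm v₅ * linForm v₆)
        - C (v₁ ⬝ᵥ v₂ * (v₃ ⬝ᵥ v₄) * (v₅ ⬝ᵥ v₆)) := by
    simp only [C_mul]
    ring
  rw [hexpand]
  simp only [map_sub, map_add, stdGaussExpect_C_mul, stdGaussExpect_C,
    stdGaussExpect_linForm_mul₆, stdGaussExpect_linForm_mul₄, stdGaussExpect_linForm_mul_linForm]
  rw [dotProduct_comm v₆ v₂, dotProduct_comm v₅ v₂, dotProduct_comm v₄ v₂, dotProduct_comm v₃ v₂,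
    dotProduct_comm v₆ v₃, dotProduct_comm v₅ v₃, dotProduct_comm v₆ v₄, dotProduct_comm v₅ v₄]
  ring

end StdGaussExpect

section PolynomialIntegral

variable {σ : Type*} [Fintype σ]

lemma prod_gaussianPDFReal_mul_eval_monomial (c : σ →₀ ℕ) (a : ℝ) (u : σ → ℝ) :
    (∏ r, gaussianPDFReal 0 1 (u r)) * eval u (monomial c a) =
      a * ∏ r, u r ^ c r * gaussianPDFReal 0 1 (u r) := by
  rw [eval_monomial, Finsupp.prod_fintype _ _ fun r => pow_zero (u r), Finset.prod_mul_distrib]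
  ring

lemma integrable_prod_gaussianPDFReal_mul_eval (p : MvPolynomial σ ℝ) :
    Integrable fun u : σ → ℝ => (∏ r, gaussianPDFReal 0 1 (u r)) * eval u p := by
  induction p using MvPolynomial.induction_on' with
  | monomial c a =>
    simp only [prod_gaussianPDFReal_mul_eval_monomial]
    exact (Integrable.fintype_prod (f := fun r t => t ^ c r * gaussianPDFReal 0 1 t)
      fun r => integrable_pow_mul_gaussianPDFReal (c r)).const_mul a
  | add p q hp hq =>
    simp only [map_add, mul_add]
    exact hp.add hq

lemma integral_prod_gaussianPDFReal_mul_eval (p : MvPolynomial σ ℝ) :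
    ∫ u : σ → ℝ, (∏ r, gaussianPDFReal 0 1 (u r)) * eval u p = stdGaussExpect p := by
  induction p using MvPolynomial.induction_on' with
  | monomial c a =>
    simp only [prod_gaussianPDFReal_mul_eval_monomial, stdGaussExpect_monomial]
    rw [integral_const_mul, integral_fintype_prod_volume_eq_prod
      (f := fun r t => t ^ c r * gaussianPDFReal 0 1 t)]
    rfl
  | add p q hp hq =>
    simp only [map_add, mul_add]
    rw [integral_add (integrable_prod_gaussianPDFReal_mul_eval p)
      (integrable_prod_gaussianPDFReal_mul_eval q), hp, hq]

end PolynomialIntegral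


section MatrixFactor

variable {ι : Type*} [Fintype ι] [DecidableEq ι] {A S : Matrix ι ι ℝ}

open scoped MatrixOrder in
lemma Matrix.PosDef.exists_mul_transpose_eq (hS : S.PosDef) :
    ∃ A : Matrix ι ι ℝ, A * Aᵀ = S ∧ A.det ≠ 0 := by
  obtain ⟨B, hB⟩ := CStarAlgebra.nonneg_iff_eq_star_mul_self.mp hS.posSemidef.nonneg
  rw [star_eq_conjTranspose, conjTranspose_eq_transpose_of_trivial] at hB
  refine ⟨Bᵀ, by rw [transpose_transpose, hB], fun h => hS.det_pos.ne' ?_⟩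
  rw [hB, det_mul, h, zero_mul]

lemma inv_eq_transpose_inv_mul_inv (hAS : A * Aᵀ = S) : S⁻¹ = (A⁻¹)ᵀ * A⁻¹ := by
  rw [← hAS, Matrix.mul_inv_rev, transpose_nonsing_inv]

lemma inv_mulVec_mulVec (hAS : A * Aᵀ = S) (hA : A.det ≠ 0) (u : ι → ℝ) :
    S⁻¹ *ᵥ (A *ᵥ u) = (A⁻¹)ᵀ *ᵥ u := by
  rw [inv_eq_transpose_inv_mul_inv hAS, mulVec_mulVec, Matrix.mul_assoc,
    nonsing_inv_mul A hA.isUnit, Matrix.mul_one]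

lemma mulVec_dotProduct_inv_mulVec_mulVec (hAS : A * Aᵀ = S) (hA : A.det ≠ 0) (u : ι → ℝ) :
    (A *ᵥ u) ⬝ᵥ (S⁻¹ *ᵥ (A *ᵥ u)) = u ⬝ᵥ u := by
  rw [inv_mulVec_mulVec hAS hA, dotProduct_comm, dotProduct_mulVec, ← mulVec_transpose,
    mulVec_mulVec, ← transpose_mul, nonsing_inv_mul A hA.isUnit, transpose_one, one_mulVec]

lemma det_eq_sq_of_mul_transpose_eq (hAS : A * Aᵀ = S) : S.det = A.det ^ 2 := by
  rw [← hAS, det_mul, det_transpose, sq]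

lemma integral_comp_mulVec (hA : A.det ≠ 0) (g : (ι → ℝ) → ℝ) :
    ∫ x, g x = |A.det| * ∫ u, g (A *ᵥ u) := by
  have hinj : LinearMap.ker (toLin' A) = ⊥ := LinearMap.ker_eq_bot.mpr
    (mulVec_injective_iff_isUnit.mpr ((isUnit_iff_isUnit_det A).mpr hA.isUnit))
  have hemb : MeasurableEmbedding (toLin' A) :=
    (LinearMap.isClosedEmbedding_of_injective hinj).measurableEmbedding
  have hmap : ∫ u, g (A *ᵥ u) = ∫ x, g x ∂(Measure.map (toLin' A) volume) :=
    (hemb.integral_map g).symm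
  rw [hmap, Real.map_matrix_volume_pi_eq_smul_volume_pi hA, integral_smul_measure,
    ENNReal.toReal_ofReal (abs_nonneg _), smul_eq_mul, ← mul_assoc, ← abs_mul,
    mul_inv_cancel₀ hA, abs_one, one_mul]

end MatrixFactor

section Gaussian

variable {n : ℕ} {μ : Fin n → ℝ} {S A : Matrix (Fin n) (Fin n) ℝ}

lemma measurable_mvGaussDensity : Measurable (mvGaussDensity μ S) := by
  unfold mvGaussDensity
  fun_prop

lemma integral_mvGaussMeasure (hS : 0 ≤ S.det) (g : (Fin n → ℝ) → ℝ) :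
    ∫ x, g x ∂mvGaussMeasure μ S = ∫ x, mvGaussDensity μ S x * g x := by
  have hnonneg (x : Fin n → ℝ) : 0 ≤ mvGaussDensity μ S x := by
    unfold mvGaussDensity
    have := Real.rpow_nonneg hS (-(1 : ℝ) / 2)
    positivity
  rw [mvGaussMeasure, integral_withDensity_eq_integral_toReal_smul
    measurable_mvGaussDensity.ennreal_ofReal (ae_of_all _ fun _ => ENNReal.ofReal_lt_top)]
  simp only [ENNReal.toReal_ofReal (hnonneg _), smul_eq_mul]

lemma mvGaussDensity_zero_one (u : Fin n → ℝ) :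
    mvGaussDensity 0 1 u = ∏ r, gaussianPDFReal 0 1 (u r) := by
  simp only [mvGaussDensity, det_one, Real.one_rpow, mul_one, inv_one, one_mulVec, sub_zero,
    gaussianPDFReal_zero_one, Finset.prod_mul_distrib, Finset.prod_const, Finset.card_univ,
    Fintype.card_fin, ← Real.exp_sum, dotProduct, ← Finset.mul_sum]
  rw [Real.sqrt_eq_rpow, ← Real.rpow_neg_one, ← Real.rpow_mul (by positivity),
    ← Real.rpow_natCast, ← Real.rpow_mul (by positivity)]
  congr 2
  · ring
  · simp only [sq]

lemma mvGaussDensity_add_mulVec (hAS : A * Aᵀ = S) (hA : A.det ≠ 0) (u : Fin n → ℝ) :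
    mvGaussDensity μ S (μ + A *ᵥ u) = |A.det|⁻¹ * mvGaussDensity 0 1 u := by
  have hdet : S.det ^ (-(1 : ℝ) / 2) = |A.det|⁻¹ := by
    rw [det_eq_sq_of_mul_transpose_eq hAS, neg_div, Real.rpow_neg (sq_nonneg _),
      ← Real.sqrt_eq_rpow, Real.sqrt_sq_eq_abs]
  simp only [mvGaussDensity, add_sub_cancel_left, mulVec_dotProduct_inv_mulVec_mulVec hAS hA,
    hdet, det_one, Real.one_rpow, inv_one, one_mulVec, sub_zero]
  ring

lemma integral_mvGaussMeasure_eq (hAS : A * Aᵀ = S) (hA : A.det ≠ 0) (g : (Fin n → ℝ) → ℝ) :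
    ∫ x, g x ∂mvGaussMeasure μ S = ∫ u, (∏ r, gaussianPDFReal 0 1 (u r)) * g (μ + A *ᵥ u) := by
  have hS : 0 ≤ S.det := det_eq_sq_of_mul_transpose_eq hAS ▸ sq_nonneg _
  calc ∫ x, g x ∂mvGaussMeasure μ S
      = ∫ x, mvGaussDensity μ S x * g x := integral_mvGaussMeasure hS g
    _ = ∫ z, mvGaussDensity μ S (μ + z) * g (μ + z) :=
      (integral_add_left_eq_self (fun x => mvGaussDensity μ S x * g x) μ).symm
    _ = |A.det| * ∫ u, mvGaussDensity μ S (μ + A *ᵥ u) * g (μ + A *ᵥ u) :=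
      integral_comp_mulVec hA _
    _ = ∫ u, (∏ r, gaussianPDFReal 0 1 (u r)) * g (μ + A *ᵥ u) := by
      rw [← integral_const_mul]
      congr 1 with u
      rw [mvGaussDensity_add_mulVec hAS hA, mvGaussDensity_zero_one, ← mul_assoc, ← mul_assoc,
        mul_inv_cancel₀ (abs_ne_zero.mpr hA), one_mul]

lemma mvScoreSigma_add_mulVec (hAS : A * Aᵀ = S) (hA : A.det ≠ 0) (u : Fin n → ℝ)
    (p q : Fin n) :
    mvScoreSigma μ S (μ + A *ᵥ u) p q =
      (1 / 2) * (((A⁻¹)ᵀ *ᵥ u) p * ((A⁻¹)ᵀ *ᵥ u) q - S⁻¹ p q) := by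
  have hsymm : (S⁻¹)ᵀ = S⁻¹ := by
    rw [inv_eq_transpose_inv_mul_inv hAS, transpose_mul, transpose_transpose]
  rw [mvScoreSigma, add_sub_cancel_left, mul_vecMulVec, vecMulVec_mul, ← mulVec_transpose, hsymm,
    inv_mulVec_mulVec hAS hA]
  simp only [Matrix.add_apply, Matrix.smul_apply, vecMulVec_apply, smul_eq_mul]
  ring

end Gaussian

theorem mvGaussian_AC_Sigma_Sigma_Sigma_general (n : ℕ) (μ : Fin n → ℝ)
    (S : Matrix (Fin n) (Fin n) ℝ) (hS : S.PosDef)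
    (a b c d e f : Fin n) :
    ∫ x, mvScoreSigma μ S x a b * mvScoreSigma μ S x c d * mvScoreSigma μ S x e f
        ∂(mvGaussMeasure μ S) =
      (1 / 8) *
        (S⁻¹ a c * S⁻¹ d e * S⁻¹ f b + S⁻¹ a c * S⁻¹ d f * S⁻¹ e b
          + S⁻¹ a d * S⁻¹ c e * S⁻¹ f b + S⁻¹ a d * S⁻¹ c f * S⁻¹ e b
          + S⁻¹ a e * S⁻¹ f c * S⁻¹ d b + S⁻¹ a e * S⁻¹ f d * S⁻¹ c b
          + S⁻¹ a f * S⁻¹ e c * S⁻¹ d b + S⁻¹ a f * S⁻¹ e d * S⁻¹ c b) := by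
  obtain ⟨A, hAS, hA⟩ := hS.exists_mul_transpose_eq
  set B := (A⁻¹)ᵀ
  have hinv (p q : Fin n) : S⁻¹ p q = B p ⬝ᵥ B q := by
    rw [inv_eq_transpose_inv_mul_inv hAS, mul_apply']
    rfl
  let Q (p q : Fin n) : MvPolynomial (Fin n) ℝ := linForm (B p) * linForm (B q) - C (B p ⬝ᵥ B q)
  have hscore (u : Fin n → ℝ) (p q : Fin n) :
      mvScoreSigma μ S (μ + A *ᵥ u) p q = (1 / 2) * eval u (Q p q) := by
    simp only [Q, mvScoreSigma_add_mulVec hAS hA, map_sub, map_mul, eval_linForm, eval_C, hinv]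
    rfl
  have hpoly (u : Fin n → ℝ) :
      mvScoreSigma μ S (μ + A *ᵥ u) a b * mvScoreSigma μ S (μ + A *ᵥ u) c d *
        mvScoreSigma μ S (μ + A *ᵥ u) e f = eval u (C (1 / 8) * (Q a b * Q c d * Q e f)) := by
    simp only [hscore, map_mul, eval_C]
    ring
  simp only [integral_mvGaussMeasure_eq hAS hA, hpoly, integral_prod_gaussianPDFReal_mul_eval,
    stdGaussExpect_C_mul, Q, stdGaussExpect_centered_quadratic_mul₃, hinv]

/-- The Amari–Chentsov component C_{ΣΣΣ} = Σ⁻¹⊗Σ⁻¹⊗Σ⁻¹ of the multivariate Gaussian family in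
symmetrized component form: with K = Σ⁻¹,
∫ M_{ab} M_{cd} M_{ef} dν = (1/8)(K_{ac}K_{de}K_{fb} + K_{ac}K_{df}K_{eb} + K_{ad}K_{ce}K_{fb}
+ K_{ad}K_{cf}K_{eb} + K_{ae}K_{fc}K_{db} + K_{ae}K_{fd}K_{cb} + K_{af}K_{ec}K_{db}
+ K_{af}K_{ed}K_{cb}). -/
theorem mvGaussian_AC_Sigma_Sigma_Sigma (n : ℕ) (hn : 1 ≤ n) (μ : Fin n → ℝ)
    (S : Matrix (Fin n) (Fin n) ℝ) (hS : S.PosDef) (hSsymm : S.IsSymm)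
    (a b c d e f : Fin n) :
    ∫ x, mvScoreSigma μ S x a b * mvScoreSigma μ S x c d * mvScoreSigma μ S x e f
        ∂(mvGaussMeasure μ S) =
      (1 / 8) *
        (S⁻¹ a c * S⁻¹ d e * S⁻¹ f b + S⁻¹ a c * S⁻¹ d f * S⁻¹ e b
          + S⁻¹ a d * S⁻¹ c e * S⁻¹ f b + S⁻¹ a d * S⁻¹ c f * S⁻¹ e b
          + S⁻¹ a e * S⁻¹ f c * S⁻¹ d b + S⁻¹ a e * S⁻¹ f d * S⁻¹ c b
          + S⁻¹ a f * S⁻¹ e c * S⁻¹ d b + S⁻¹ a f * S⁻¹ e d * S⁻¹ c b) :=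
  mvGaussian_AC_Sigma_Sigma_Sigma_general n μ S hS a b c d e f
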